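/- Let $X$ and $Y$ be complexifications of real Banach spaces $X_\mathbb{R}$ and $Y_\mathbb{R}$, let $G \subset X$ be open and connected with $G \cap X_\mathbb{R} \ne \emptyset$, and let $f: G \to Y$ be holomorphic. If $f$ vanishes on $G \cap X_\mathbb{R}$, then $f$ is identically zero on $G$. -/

import Mathlib

/-- A conjugation on a complex Banach space `X`, exhibiting `X` as the
    complexification of its real subspace of fixed points: an additive,
    complex-antilinear, involutive isometry. -/
structure Conjugation (X : Type*) [NormedAddCommGroup X] [NormedSpace ℂ X] where
  toFun : X → X
  map_add : ∀ x y : X, toFun (x + y) = toFun x + toFun y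
  map_smul : ∀ (c : ℂ) (x : X), toFun (c • x) = (starRingEnd ℂ c) • toFun x
  invol : ∀ x : X, toFun (toFun x) = x
  isom : ∀ x : X, ‖toFun x‖ = ‖x‖

/-! Near a real point `x₀`, write `x = a + i b` with `a`, `b` real and close to `x₀`: then
`z ↦ f (a + z • b)` is holomorphic on a disc and vanishes on its real diameter, so it vanishes at
`z = i`, i.e. `f x = 0`. Hence the set of points near which `f` vanishes meets `G`; it is open,
and relatively closed in `G` because on a ball in `G` vanishing near one point propagates along
complex lines. Connectedness of `G` finishes. -/

open Complex Metric Filter Topology Set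

namespace Conjugation

variable {X : Type*} [NormedAddCommGroup X] [NormedSpace ℂ X] (σ : Conjugation X)

theorem map_sub (x y : X) : σ.toFun (x - y) = σ.toFun x - σ.toFun y := by
  have hneg : σ.toFun (-y) = -σ.toFun y := by simpa using σ.map_smul (-1) y
  rw [sub_eq_add_neg, σ.map_add, hneg, sub_eq_add_neg]

theorem map_ofReal_smul (t : ℝ) (x : X) : σ.toFun ((t : ℂ) • x) = (t : ℂ) • σ.toFun x := by
  rw [σ.map_smul, conj_ofReal]

noncomputable def re (x : X) : X := (2⁻¹ : ℂ) • (x + σ.toFun x)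

noncomputable def im (x : X) : X := (I / 2) • (σ.toFun x - x)

theorem toFun_re (x : X) : σ.toFun (σ.re x) = σ.re x := by
  rw [re, σ.map_smul, σ.map_add, σ.invol, add_comm, map_inv₀, map_ofNat]

theorem toFun_im (x : X) : σ.toFun (σ.im x) = σ.im x := by
  rw [im, σ.map_smul, σ.map_sub, σ.invol, map_div₀, conj_I, map_ofNat, neg_div, neg_smul,
    ← smul_neg, neg_sub]

theorem re_add_I_smul_im (x : X) : σ.re x + I • σ.im x = x := by
  simp only [re, im, smul_smul, smul_add, smul_sub]
  have : I * (I / 2) = -2⁻¹ := by rw [← mul_div_assoc, I_mul_I]; ring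
  rw [this]
  module

theorem norm_re_le (x : X) : ‖σ.re x‖ ≤ ‖x‖ := by
  calc ‖σ.re x‖ ≤ 2⁻¹ * (‖x‖ + ‖σ.toFun x‖) := by
        rw [re, norm_smul, norm_inv, RCLike.norm_ofNat]; gcongr; exact norm_add_le _ _
    _ = ‖x‖ := by rw [σ.isom]; ring

theorem norm_im_le (x : X) : ‖σ.im x‖ ≤ ‖x‖ := by
  calc ‖σ.im x‖ ≤ 2⁻¹ * (‖σ.toFun x‖ + ‖x‖) := by
        rw [im, norm_smul, norm_div, norm_I, RCLike.norm_ofNat, one_div]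
        gcongr; exact norm_sub_le _ _
    _ = ‖x‖ := by rw [σ.isom]; ring

end Conjugation

section OneVariable

variable {Y : Type*} [NormedAddCommGroup Y] [NormedSpace ℂ Y] [CompleteSpace Y]

theorem tendsto_ofReal_nhdsNE (t : ℝ) : Tendsto ((↑) : ℝ → ℂ) (𝓝[≠] t) (𝓝[≠] (t : ℂ)) :=
  tendsto_nhdsWithin_iff.mpr
    ⟨continuous_ofReal.continuousWithinAt.tendsto,
      eventually_nhdsWithin_of_forall fun _ ht => by simpa using ht⟩

theorem DifferentiableOn.eqOn_zero_of_forall_ofReal {g : ℂ → Y} {D : Set ℂ}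
    (hg : DifferentiableOn ℂ g D) (hDo : IsOpen D) (hDc : IsPreconnected D) {t₀ : ℝ}
    (ht₀ : (t₀ : ℂ) ∈ D) (hreal : ∀ t : ℝ, (t : ℂ) ∈ D → g t = 0) : EqOn g 0 D := by
  have hnear : ∀ᶠ t : ℝ in 𝓝[≠] t₀, g t = 0 :=
    nhdsWithin_le_nhds <| Eventually.mono (continuous_ofReal.tendsto t₀ (hDo.mem_nhds ht₀))
      fun t ht => hreal t ht
  exact (hg.analyticOnNhd hDo).eqOn_zero_of_preconnected_of_frequently_eq_zero hDc ht₀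
    ((tendsto_ofReal_nhdsNE t₀).frequently hnear.frequently)

end OneVariable

section Identity

variable {X Y : Type*} [NormedAddCommGroup X] [NormedSpace ℂ X]
  [NormedAddCommGroup Y] [NormedSpace ℂ Y] [CompleteSpace Y] {f : X → Y}

theorem DifferentiableOn.eqOn_zero_of_convex_of_eventuallyEq_zero {U : Set X}
    (hf : DifferentiableOn ℂ f U) (hUo : IsOpen U) (hUc : Convex ℝ U) {y : X} (hy : y ∈ U)
    (hfy : f =ᶠ[𝓝 y] 0) : EqOn f 0 U := by
  intro w hw
  set line : ℂ → X := fun z => y + z • (w - y)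
  have hline : Continuous line := by fun_prop
  set D : Set ℂ := line ⁻¹' U
  have hDc : Convex ℝ D :=
    (hUc.translate_preimage_right y).linear_preimage
      ((LinearMap.toSpanSingleton ℂ X (w - y)).restrictScalars ℝ)
  have hg : DifferentiableOn ℂ (f ∘ line) D :=
    hf.comp (by fun_prop : Differentiable ℂ line).differentiableOn (mapsTo_preimage _ _)
  have h0 : f ∘ line =ᶠ[𝓝 0] 0 := hline.tendsto' 0 y (by simp [line]) |>.eventually hfy
  have hzero :=
    (hg.analyticOnNhd (hUo.preimage hline)).eqOn_zero_of_preconnected_of_eventuallyEq_zero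
      hDc.isPreconnected (by simpa [D, line]) h0
  simpa [line] using hzero (show (1 : ℂ) ∈ D by simpa [D, line])

theorem DifferentiableOn.eqOn_zero_of_preconnected_of_eventuallyEq_zero {G : Set X}
    (hf : DifferentiableOn ℂ f G) (hGo : IsOpen G) (hGc : IsPreconnected G) {x₀ : X}
    (hx₀ : x₀ ∈ G) (hfx₀ : f =ᶠ[𝓝 x₀] 0) : EqOn f 0 G := by
  set V : Set X := {x | f =ᶠ[𝓝 x] 0}
  have hclosed : closure V ∩ G ⊆ V := by
    rintro x ⟨hxV, hxG⟩
    obtain ⟨ρ, hρ, hball⟩ := isOpen_iff.mp hGo x hxG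
    obtain ⟨y, hyV, hy⟩ := mem_closure_iff.mp hxV ρ hρ
    have hzero := (hf.mono hball).eqOn_zero_of_convex_of_eventuallyEq_zero isOpen_ball
      (convex_ball x ρ) (mem_ball'.mpr hy) hyV
    exact eventually_of_mem (ball_mem_nhds x hρ) hzero
  exact fun x hx => (hGc.subset_of_closure_inter_subset isOpen_setOfPred_eventually_nhds
    ⟨x₀, hx₀, hfx₀⟩ hclosed hx).self_of_nhds

end Identity

theorem Conjugation.eventuallyEq_zero_of_eqOn_real {X Y : Type*} [NormedAddCommGroup X]
    [NormedSpace ℂ X] [NormedAddCommGroup Y] [NormedSpace ℂ Y] [CompleteSpace Y]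
    (σ : Conjugation X) {G : Set X} (hGo : IsOpen G) {f : X → Y} (hf : DifferentiableOn ℂ f G)
    (hz : ∀ x ∈ G ∩ {x | σ.toFun x = x}, f x = 0) {x₀ : X} (hx₀ : x₀ ∈ G)
    (hx₀r : σ.toFun x₀ = x₀) : f =ᶠ[𝓝 x₀] 0 := by
  obtain ⟨r, hr, hball⟩ := isOpen_iff.mp hGo x₀ hx₀
  filter_upwards [ball_mem_nhds x₀ (by positivity : 0 < r / 3)] with x hx
  rw [mem_ball, dist_eq_norm] at hx
  set a := x₀ + σ.re (x - x₀)
  set b := σ.im (x - x₀)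
  set line : ℂ → X := fun z => a + z • b
  have hmaps : MapsTo line (ball 0 2) G := by
    intro z hz
    apply hball
    rw [mem_ball_zero_iff] at hz
    rw [mem_ball, dist_eq_norm]
    calc ‖line z - x₀‖ = ‖σ.re (x - x₀) + z • b‖ := by simp only [line, a]; abel_nf
      _ ≤ ‖x - x₀‖ + ‖z‖ * ‖x - x₀‖ := by
        grw [norm_add_le, norm_smul, σ.norm_re_le, σ.norm_im_le]
      _ < r / 3 + 2 * (r / 3) := by gcongr
      _ = r := by ring
  have hreal : ∀ t : ℝ, σ.toFun (line t) = line t := fun t => by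
    simp only [line, a, b, σ.map_add, σ.map_ofReal_smul, hx₀r, σ.toFun_re, σ.toFun_im]
  have hg : DifferentiableOn ℂ (f ∘ line) (ball 0 2) :=
    hf.comp (by fun_prop : Differentiable ℂ line).differentiableOn hmaps
  have hzero := hg.eqOn_zero_of_forall_ofReal isOpen_ball (convex_ball 0 2).isPreconnected
    (t₀ := 0) (by simp) fun t ht => hz _ ⟨hmaps ht, hreal t⟩
  have hI : line I = x := by
    simp only [line, a, b, add_assoc, σ.re_add_I_smul_im, add_sub_cancel]
  simpa [hI] using hzero (show I ∈ ball (0 : ℂ) 2 by simp)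

theorem stmt3_general {X Y : Type*} [NormedAddCommGroup X] [NormedSpace ℂ X]
    [NormedAddCommGroup Y] [NormedSpace ℂ Y] [CompleteSpace Y]
    (σ : Conjugation X) (G : Set X) (hGo : IsOpen G) (hGc : IsConnected G)
    (hne : (G ∩ {x | σ.toFun x = x}).Nonempty)
    (f : X → Y) (hf : DifferentiableOn ℂ f G)
    (hz : ∀ x ∈ G ∩ {x | σ.toFun x = x}, f x = 0) :
    ∀ x ∈ G, f x = 0 := by
  obtain ⟨x₀, hx₀, hx₀r⟩ := hne
  exact hf.eqOn_zero_of_preconnected_of_eventuallyEq_zero hGo hGc.isPreconnected hx₀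
    (σ.eventuallyEq_zero_of_eqOn_real hGo hf hz hx₀ hx₀r)

/-- Identity theorem: a holomorphic function on a connected open set meeting the real
    subspace which vanishes on the real points vanishes identically. -/
theorem stmt3 {X Y : Type*} [NormedAddCommGroup X] [NormedSpace ℂ X] [CompleteSpace X]
    [NormedAddCommGroup Y] [NormedSpace ℂ Y] [CompleteSpace Y]
    (σ : Conjugation X) (G : Set X) (hGo : IsOpen G) (hGc : IsConnected G)
    (hne : (G ∩ {x | σ.toFun x = x}).Nonempty)
    (f : X → Y) (hf : DifferentiableOn ℂ f G)
    (hz : ∀ x ∈ G ∩ {x | σ.toFun x = x}, f x = 0) :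
    ∀ x ∈ G, f x = 0 :=
  stmt3_general σ G hGo hGc hne f hf hz
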